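/- arXiv:1504.00470 — 2 statements merged into one kernel-verified Lean document; each statement's English description precedes it below -/
import Mathlib

section
/- For d ≥ 3 odd, the quantities (1/24)(d-3)(d-5)(1/d)Δ_d and (1/8)(d-1)(d-3)(1/d)Δ_d are integers, where Δ_d = d³∏_{p|d}(1-p⁻²). -/
/-! Both counts are integers because `Δ_d / d` is Jordan's totient
`J₂(d) = (d / rad d)² ∏_{p ∣ d} (p² - 1)`, an integer. For odd `d`, the factors `(d - 3)(d - 5)`
and `(d - 1)(d - 3)` are of the form `m² - 1` with `m` odd, hence divisible by `8`. The missing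
factor `3` in the first count comes from `d - 3` or `d - 5` unless `d ≡ 1 [MOD 3]`; then some
prime `p ∣ d` differs from `3`, and `3 ∣ p² - 1 ∣ J₂(d)` by Fermat. -/

/-- `Δ_d = d³ ∏_{p ∣ d} (1 - p⁻²)`. -/
noncomputable def DeltaFormula (d : ℕ) : ℚ :=
  (d : ℚ) ^ 3 * ∏ p ∈ d.primeFactors, (1 - ((p : ℚ))⁻¹ ^ 2)

def jordanTotientTwo (d : ℕ) : ℤ :=
  ((d / ∏ p ∈ d.primeFactors, p : ℕ) : ℤ) ^ 2 * ∏ p ∈ d.primeFactors, ((p : ℤ) ^ 2 - 1)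

theorem one_div_mul_deltaFormula (d : ℕ) :
    1 / (d : ℚ) * DeltaFormula d = jordanTotientTwo d := by
  set r := ∏ p ∈ d.primeFactors, p with hr
  obtain ⟨q, hq⟩ : r ∣ d := Nat.prod_primeFactors_dvd d
  have hr_pos : 0 < r := Finset.prod_pos fun p hp => (Nat.prime_of_mem_primeFactors hp).pos
  have hfactor : ∀ p ∈ d.primeFactors, (1 - (p : ℚ)⁻¹ ^ 2) * (p : ℚ) ^ 2 = (p : ℚ) ^ 2 - 1 := by
    intro p hp
    have : (p : ℚ) ≠ 0 := by exact_mod_cast (Nat.prime_of_mem_primeFactors hp).ne_zero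
    field_simp
  have hd_cast : (d : ℚ) = r * q := by exact_mod_cast hq
  have hdiv : d / r = q := by rw [hq, Nat.mul_div_cancel_left q hr_pos]
  calc 1 / (d : ℚ) * DeltaFormula d
      = (q : ℚ) ^ 2 * ((∏ p ∈ d.primeFactors, (1 - (p : ℚ)⁻¹ ^ 2)) * (r : ℚ) ^ 2) := by
        rw [DeltaFormula]
        field_simp
        rw [hd_cast]
        ring
    _ = jordanTotientTwo d := by
        rw [jordanTotientTwo, ← hr, hdiv, hr, Nat.cast_prod,
          ← Finset.prod_pow, ← Finset.prod_mul_distrib, Finset.prod_congr rfl hfactor]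
        push_cast
        rfl

theorem three_dvd_jordanTotientTwo {d : ℕ} (hd : d ≠ 1) (h3 : ¬ 3 ∣ d) :
    (3 : ℤ) ∣ jordanTotientTwo d := by
  obtain ⟨p, hp, hpd⟩ := Nat.exists_prime_and_dvd hd
  have hmem : p ∈ d.primeFactors :=
    Nat.mem_primeFactors.2 ⟨hp, hpd, by rintro rfl; exact h3 (dvd_zero 3)⟩
  have hcop : IsCoprime (p : ℤ) (3 : ℕ) :=
    Nat.isCoprime_iff_coprime.2 ((Nat.coprime_primes hp Nat.prime_three).2
      (by rintro rfl; exact h3 hpd))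
  exact (Int.prime_dvd_pow_sub_one Nat.prime_three hcop).trans
    ((Finset.dvd_prod_of_mem (fun p : ℕ => (p : ℤ) ^ 2 - 1) hmem).mul_left _)

theorem twentyFour_dvd_sub_three_mul_sub_five_mul_jordanTotientTwo {d : ℕ} (hd : Odd d)
    (hd1 : d ≠ 1) : (24 : ℤ) ∣ (d - 3) * (d - 5) * jordanTotientTwo d := by
  have h8 : (8 : ℤ) ∣ (d - 3) * (d - 5) := by
    have h := Int.eight_dvd_sq_sub_one_of_odd (k := d - 4) (hd.natCast.sub_even (by decide))
    rwa [show ((d : ℤ) - 4) ^ 2 - 1 = (d - 3) * (d - 5) by ring] at h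
  have h3 : (3 : ℤ) ∣ (d - 3) * (d - 5) * jordanTotientTwo d := by
    rcases (by omega : d % 3 = 0 ∨ d % 3 = 1 ∨ d % 3 = 2) with h | h | h
    · exact ((by omega : (3 : ℤ) ∣ d - 3).mul_right _).mul_right _
    · exact (three_dvd_jordanTotientTwo hd1 (by omega)).mul_left _
    · exact ((by omega : (3 : ℤ) ∣ d - 5).mul_left _).mul_right _
  simpa using IsCoprime.mul_dvd (by norm_num) (h8.mul_right _) h3

/-- For `d ≥ 3` odd, the counts `(1/24)(d-3)(d-5)(1/d)Δ_d` and `(1/8)(d-1)(d-3)(1/d)Δ_d`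
of reduced genus two square-tiled surfaces with torsion order `M = 1` and spin `3`
resp. `1` are integers. -/
theorem integrality_torsion_one_counts (d : ℕ) (hd : Odd d) (hd3 : 3 ≤ d) :
    (∃ n : ℤ, (1 / 24 : ℚ) * ((d : ℚ) - 3) * ((d : ℚ) - 5) * (1 / (d : ℚ))
        * DeltaFormula d = (n : ℚ)) ∧
    (∃ n : ℤ, (1 / 8 : ℚ) * ((d : ℚ) - 1) * ((d : ℚ) - 3) * (1 / (d : ℚ))
        * DeltaFormula d = (n : ℚ)) := by
  have hJ := one_div_mul_deltaFormula d
  have h24 := twentyFour_dvd_sub_three_mul_sub_five_mul_jordanTotientTwo hd (by omega)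
  have h8 : (8 : ℤ) ∣ (d - 1) * (d - 3) * jordanTotientTwo d := by
    have h := Int.eight_dvd_sq_sub_one_of_odd (k := d - 2) (hd.natCast.sub_even (by decide))
    rw [show ((d : ℤ) - 2) ^ 2 - 1 = (d - 1) * (d - 3) by ring] at h
    exact h.mul_right _
  refine ⟨⟨(d - 3) * (d - 5) * jordanTotientTwo d / 24, ?_⟩,
    ⟨(d - 1) * (d - 3) * jordanTotientTwo d / 8, ?_⟩⟩
  · rw [Int.cast_div h24 (by norm_num)]
    push_cast
    rw [← hJ]
    ring
  · rw [Int.cast_div h8 (by norm_num)]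
    push_cast
    rw [← hJ]
    ring
end

section
/- Let X = E₁ ∪ E₂ be a reducible genus two curve (two elliptic curves joined at a node S) and p: X → E an origami map of degree d = d₁ + d₂ with d_i = deg(p|_{E_i}). If d is odd, then the number of integral Weierstrass points ε(X,ω) lies in {1, 3}; more precisely exactly one of d₁, d₂ is odd, the odd-degree component carries no integral Weierstrass points, and the even-degree component carries 1 or 3 of them. -/
/-!
The integral Weierstrass points of a component are the nonzero elements of `Eᵢ[2] ⊓ ker qᵢ`,
a subgroup both of the Klein four-group `Eᵢ[2]` and of `ker qᵢ`, of order `dᵢ`. By Lagrange it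
is trivial when `dᵢ` is odd; when `dᵢ` is even, Cauchy's theorem puts an element of order `2`
in `ker qᵢ`, so the subgroup has order `2` or `4` and `1` or `3` nonzero elements.
Since `d₁ + d₂` is odd, exactly one component is of each kind.
-/

open AddSubgroup

lemma eq_zero_of_two_nsmul_eq_zero_of_odd_card {G : Type*} [AddGroup G] (hG : Odd (Nat.card G))
    {x : G} (hx : 2 • x = 0) : x = 0 := by
  have : Finite G := Nat.finite_of_card_ne_zero hG.pos.ne'
  have hcop : Nat.Coprime 2 (Nat.card G) := Nat.coprime_two_left.mpr hG
  rw [← AddMonoid.addOrderOf_eq_one_iff, ← Nat.dvd_one, ← hcop.gcd_eq_one]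
  exact Nat.dvd_gcd (addOrderOf_dvd_of_nsmul_eq_zero hx) (addOrderOf_dvd_natCard x)

lemma AddSubgroup.card_nonzero_mem_eq_card_sub_one {A : Type*} [AddGroup A] (H : AddSubgroup A) :
    Nat.card {x : A // x ∈ H ∧ x ≠ 0} = Nat.card H - 1 := by
  rw [← SetLike.coe_sort_coe, Nat.card_coe_set_eq,
    ← Set.ncard_sdiff_singleton_of_mem H.zero_mem, ← Nat.card_coe_set_eq]
  rfl

section TwoTorsionInKernel

variable {A B : Type*} [AddCommGroup A] [AddCommGroup B]

lemma AddSubgroup.mem_torsionBy_two {x : A} : x ∈ torsionBy A 2 ↔ 2 • x = 0 :=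
  torsionBy.nsmul_iff (n := 2)

lemma AddSubgroup.card_torsionBy_two : Nat.card (torsionBy A 2) = Nat.card {x : A // 2 • x = 0} :=
  Nat.card_congr (Equiv.subtypeEquivRight fun _ => mem_torsionBy_two)

lemma card_nonzero_two_torsion_ker_eq (q : A →+ B) :
    Nat.card {x : A // 2 • x = 0 ∧ x ≠ 0 ∧ q x = 0} = Nat.card ↥(torsionBy A 2 ⊓ q.ker) - 1 := by
  rw [← card_nonzero_mem_eq_card_sub_one]
  refine Nat.card_congr (Equiv.subtypeEquivRight fun x => ?_)
  rw [mem_inf, mem_torsionBy_two, AddMonoidHom.mem_ker]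
  tauto

lemma card_nonzero_two_torsion_ker_eq_zero_of_odd (q : A →+ B) (hodd : Odd (Nat.card q.ker)) :
    Nat.card {x : A // 2 • x = 0 ∧ x ≠ 0 ∧ q x = 0} = 0 := by
  refine Nat.card_eq_zero.mpr (.inl ⟨fun ⟨x, hx2, hx0, hqx⟩ => hx0 ?_⟩)
  exact congrArg Subtype.val <|
    eq_zero_of_two_nsmul_eq_zero_of_odd_card hodd (x := ⟨x, hqx⟩) (Subtype.ext hx2)

lemma card_nonzero_two_torsion_ker_mem_of_even (q : A →+ B)
    (ht : Nat.card {x : A // 2 • x = 0} = 4) [Finite q.ker] (heven : Even (Nat.card q.ker)) :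
    Nat.card {x : A // 2 • x = 0 ∧ x ≠ 0 ∧ q x = 0} ∈ ({1, 3} : Set ℕ) := by
  set K := torsionBy A 2 ⊓ q.ker
  have hK4 : Nat.card K ∣ 4 := by
    rw [← ht, ← card_torsionBy_two]
    exact card_dvd_of_le inf_le_left
  obtain ⟨x, hx⟩ := exists_prime_addOrderOf_dvd_card' (G := q.ker) 2 heven.two_dvd
  have hxK : (x : A) ∈ K := ⟨mem_torsionBy_two.2 (by
    rw [← AddSubgroup.coe_nsmul, ← hx, addOrderOf_nsmul_eq_zero, coe_zero]), x.2⟩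
  have hK2 : 2 ∣ Nat.card K := by
    rw [← hx, ← addOrderOf_coe, ← addOrderOf_mk (x : A) hxK]
    exact addOrderOf_dvd_natCard _
  rw [card_nonzero_two_torsion_ker_eq]
  have : Nat.card K ≤ 4 := Nat.le_of_dvd four_pos hK4
  interval_cases Nat.card K <;> simp_all

end TwoTorsionInKernel

theorem reducible_spin_odd_degree_general {E₁ E₂ E : Type*}
    [AddCommGroup E₁] [AddCommGroup E₂] [AddCommGroup E]
    (q₁ : E₁ →+ E) (q₂ : E₂ →+ E)
    (ht₁ : Nat.card {x : E₁ // 2 • x = 0} = 4)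
    (ht₂ : Nat.card {x : E₂ // 2 • x = 0} = 4)
    (d₁ d₂ : ℕ) (hk₁ : Nat.card q₁.ker = d₁) (hk₂ : Nat.card q₂.ker = d₂)
    (hd₁ : 0 < d₁) (hd₂ : 0 < d₂) (hodd : Odd (d₁ + d₂)) :
    ((Odd d₁ ∧ Even d₂) ∨ (Even d₁ ∧ Odd d₂)) ∧
    (Odd d₁ → Nat.card {x : E₁ // 2 • x = 0 ∧ x ≠ 0 ∧ q₁ x = 0} = 0) ∧
    (Odd d₂ → Nat.card {x : E₂ // 2 • x = 0 ∧ x ≠ 0 ∧ q₂ x = 0} = 0) ∧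
    (Even d₁ → Nat.card {x : E₁ // 2 • x = 0 ∧ x ≠ 0 ∧ q₁ x = 0} ∈ ({1, 3} : Set ℕ)) ∧
    (Even d₂ → Nat.card {x : E₂ // 2 • x = 0 ∧ x ≠ 0 ∧ q₂ x = 0} ∈ ({1, 3} : Set ℕ)) ∧
    (Nat.card {x : E₁ // 2 • x = 0 ∧ x ≠ 0 ∧ q₁ x = 0}
      + Nat.card {x : E₂ // 2 • x = 0 ∧ x ≠ 0 ∧ q₂ x = 0} ∈ ({1, 3} : Set ℕ)) := by
  have : Finite q₁.ker := Nat.finite_of_card_ne_zero (hk₁ ▸ hd₁.ne')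
  have : Finite q₂.ker := Nat.finite_of_card_ne_zero (hk₂ ▸ hd₂.ne')
  have odd₁ (h : Odd d₁) := card_nonzero_two_torsion_ker_eq_zero_of_odd q₁ (hk₁ ▸ h)
  have odd₂ (h : Odd d₂) := card_nonzero_two_torsion_ker_eq_zero_of_odd q₂ (hk₂ ▸ h)
  have even₁ (h : Even d₁) := card_nonzero_two_torsion_ker_mem_of_even q₁ ht₁ (hk₁ ▸ h)
  have even₂ (h : Even d₂) := card_nonzero_two_torsion_ker_mem_of_even q₂ ht₂ (hk₂ ▸ h)
  have parity : (Odd d₁ ∧ Even d₂) ∨ (Even d₁ ∧ Odd d₂) := by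
    rcases Nat.even_or_odd d₁ with h | h <;> grind [Nat.odd_add]
  refine ⟨parity, odd₁, odd₂, even₁, even₂, ?_⟩
  rcases parity with ⟨h₁, h₂⟩ | ⟨h₁, h₂⟩
  · simpa [odd₁ h₁] using even₂ h₂
  · simpa [odd₂ h₂] using even₁ h₁

/-- Abstract form of the spin computation for a reducible genus two surface
`X = E₁ ∪ E₂` with an origami map `p : X → E` of odd degree `d = d₁ + d₂`:
modelling the components and target as abelian groups with Klein-four 2-torsion and
`p|_{E_i}` as surjective homomorphisms `qᵢ` with kernel of order `dᵢ`, if `d₁ + d₂`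
is odd then exactly one `dᵢ` is odd, the odd-degree component carries no integral
Weierstrass points (nonzero 2-torsion points mapping to `0`), the even-degree
component carries `1` or `3` of them, and the total number `ε(X,ω)` lies in `{1,3}`. -/
theorem reducible_spin_odd_degree {E₁ E₂ E : Type*}
    [AddCommGroup E₁] [AddCommGroup E₂] [AddCommGroup E]
    (q₁ : E₁ →+ E) (q₂ : E₂ →+ E)
    (hs₁ : Function.Surjective q₁) (hs₂ : Function.Surjective q₂)
    (ht₁ : Nat.card {x : E₁ // 2 • x = 0} = 4)
    (ht₂ : Nat.card {x : E₂ // 2 • x = 0} = 4)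
    (htE : Nat.card {y : E // 2 • y = 0} = 4)
    (d₁ d₂ : ℕ) (hk₁ : Nat.card q₁.ker = d₁) (hk₂ : Nat.card q₂.ker = d₂)
    (hd₁ : 0 < d₁) (hd₂ : 0 < d₂) (hodd : Odd (d₁ + d₂)) :
    ((Odd d₁ ∧ Even d₂) ∨ (Even d₁ ∧ Odd d₂)) ∧
    (Odd d₁ → Nat.card {x : E₁ // 2 • x = 0 ∧ x ≠ 0 ∧ q₁ x = 0} = 0) ∧
    (Odd d₂ → Nat.card {x : E₂ // 2 • x = 0 ∧ x ≠ 0 ∧ q₂ x = 0} = 0) ∧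
    (Even d₁ → Nat.card {x : E₁ // 2 • x = 0 ∧ x ≠ 0 ∧ q₁ x = 0} ∈ ({1, 3} : Set ℕ)) ∧
    (Even d₂ → Nat.card {x : E₂ // 2 • x = 0 ∧ x ≠ 0 ∧ q₂ x = 0} ∈ ({1, 3} : Set ℕ)) ∧
    (Nat.card {x : E₁ // 2 • x = 0 ∧ x ≠ 0 ∧ q₁ x = 0}
      + Nat.card {x : E₂ // 2 • x = 0 ∧ x ≠ 0 ∧ q₂ x = 0} ∈ ({1, 3} : Set ℕ)) :=
  reducible_spin_odd_degree_general q₁ q₂ ht₁ ht₂ d₁ d₂ hk₁ hk₂ hd₁ hd₂ hodd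
end
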